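/- (Deduction theorem) For all sets of formulas Γ and all formulas A, B of L⊃: Γ ∪ {A} ⊢ B if and only if Γ ⊢ A⊃B, where ⊢ is derivability in the Hilbert system S. -/

import Mathlib

/-! Induction on the derivation of `B` from `Γ ∪ {A}`: axioms and members of `Γ` become
`A ⊃ C` through Ax1 and AxM1, the hypothesis `A` gives `A ⊃ A`, and AxM2 carries modus ponens
under `A ⊃`. The converse is one application of MP in `Γ ∪ {A}`. -/

/-- Formulas of the language L⊃ : propositional variables with ∧, ∨,
    intuitionistic → (`imp`) and classical ⊃ (`sup`). -/
inductive Formula : Type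
  | var : ℕ → Formula
  | and : Formula → Formula → Formula
  | or  : Formula → Formula → Formula
  | imp : Formula → Formula → Formula
  | sup : Formula → Formula → Formula

/-- The Hilbert system S : `SDeriv Γ A` means Γ ⊢ A. -/
inductive SDeriv : Set Formula → Formula → Prop
  | hyp {Γ A} : A ∈ Γ → SDeriv Γ A
  | ax1 {Γ} (A B : Formula) : SDeriv Γ (A.imp (B.imp A))
  | ax2 {Γ} (A B C : Formula) :
      SDeriv Γ ((A.imp (B.imp C)).imp ((A.imp B).imp (A.imp C)))
  | ax3 {Γ} (A B : Formula) : SDeriv Γ ((A.and B).imp A)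
  | ax4 {Γ} (A B : Formula) : SDeriv Γ ((A.and B).imp B)
  | ax5 {Γ} (A B C : Formula) :
      SDeriv Γ ((C.imp A).imp ((C.imp B).imp (C.imp (A.and B))))
  | ax6 {Γ} (A B : Formula) : SDeriv Γ (A.imp (A.or B))
  | ax7 {Γ} (A B : Formula) : SDeriv Γ (B.imp (A.or B))
  | ax8 {Γ} (A B C : Formula) :
      SDeriv Γ ((A.imp C).imp ((B.imp C).imp ((A.or B).imp C)))
  | axM1 {Γ} (A B : Formula) : SDeriv Γ ((A.imp B).sup (A.sup B))
  | axM2 {Γ} (A B C : Formula) :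
      SDeriv Γ ((A.sup (B.sup C)).imp ((A.sup B).sup (A.sup C)))
  | axM3 {Γ} (A B C : Formula) :
      SDeriv Γ ((A.sup (B.imp C)).imp (B.imp (A.sup C)))
  | axM4 {Γ} (A B C : Formula) :
      SDeriv Γ ((A.imp (B.sup C)).imp (B.sup (A.imp C)))
  | axM5 {Γ} (A B C : Formula) :
      SDeriv Γ (((A.sup B).sup C).imp ((A.sup C).imp C))
  | axM6 {Γ} (A B C : Formula) :
      SDeriv Γ ((A.sup C).imp ((B.sup C).imp ((A.or B).sup C)))
  | mp {Γ A B} : SDeriv Γ A → SDeriv Γ (A.sup B) → SDeriv Γ B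

namespace SDeriv

variable {Γ Δ : Set Formula} {A B C : Formula}

theorem mono (h : SDeriv Γ A) (hΓΔ : Γ ⊆ Δ) : SDeriv Δ A := by
  induction h <;> aesop (add 50% constructors SDeriv)

theorem sup_of_imp (h : SDeriv Γ (A.imp B)) : SDeriv Γ (A.sup B) :=
  h.mp (axM1 A B)

theorem mp_imp (hA : SDeriv Γ A) (hAB : SDeriv Γ (A.imp B)) : SDeriv Γ B :=
  hA.mp hAB.sup_of_imp

theorem imp_self (A : Formula) : SDeriv Γ (A.imp A) :=
  (ax1 A A).mp_imp ((ax1 A (A.imp A)).mp_imp (ax2 A (A.imp A) A))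

theorem sup_self (A : Formula) : SDeriv Γ (A.sup A) :=
  (imp_self A).sup_of_imp

theorem sup_intro (A : Formula) (h : SDeriv Γ B) : SDeriv Γ (A.sup B) :=
  (h.mp_imp (ax1 B A)).sup_of_imp

theorem sup_mp (hB : SDeriv Γ (A.sup B)) (hBC : SDeriv Γ (A.sup (B.sup C))) :
    SDeriv Γ (A.sup C) :=
  hB.mp (hBC.mp_imp (axM2 A B C))

theorem sup_of_union_singleton (h : SDeriv (Γ ∪ {A}) B) : SDeriv Γ (A.sup B) := by
  induction h with
  | hyp hB =>
    rcases hB with hB | rfl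
    · exact sup_intro A (hyp hB)
    · exact sup_self _
  | mp _ _ ihB ihBC => exact sup_mp ihB ihBC
  | _ => exact sup_intro A (by aesop (add 50% constructors SDeriv))

end SDeriv

/-- Deduction theorem: Γ ∪ {A} ⊢ B iff Γ ⊢ A ⊃ B. -/
theorem deduction_theorem (Γ : Set Formula) (A B : Formula) :
    SDeriv (Γ ∪ {A}) B ↔ SDeriv Γ (A.sup B) :=
  ⟨SDeriv.sup_of_union_singleton, fun h =>
    (SDeriv.hyp (Set.mem_union_right Γ (Set.mem_singleton A))).mp
      (h.mono Set.subset_union_left)⟩
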